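/- For d ∈ {1,...,9}, the function g_d : [1/(10d), 1/(d+1)] → ℝ defined by g_d(x) = (d+1)·β_d·x − (10/9)·x·(ln x + ln(d+1)), with β_d = 10·(9 + ln 10 + 9d·ln(1 − 1/(d+1)))/(81(d+1)), attains its maximum at x₁ = 10^{1/9}·(1 − 1/(d+1))^d/(d+1), and the maximum value equals 10^{10/9}·(1 − 1/(d+1))^d/(9(d+1)). -/

import Mathlib

noncomputable def beta (d : ℕ) : ℝ :=
  10 * (9 + Real.log 10 + 9 * (d : ℝ) * Real.log (1 - 1 / ((d : ℝ) + 1))) / (81 * ((d : ℝ) + 1))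

noncomputable def g (d : ℕ) (x : ℝ) : ℝ :=
  ((d : ℝ) + 1) * beta d * x - (10 / 9) * x * (Real.log x + Real.log ((d : ℝ) + 1))

/-!
The constant `β_d` is tuned so that `(d+1) β_d = 10/9 · (1 + log x₁ + log (d+1))`, which turns
`g_d` into `x ↦ 10/9 · x · (1 + log (x₁ / x))`. By `log t ≤ t - 1` this is at most `10/9 · x₁`,
with equality at `x = x₁`. That `x₁` lies in the interval comes from
`1/3 < 1/e ≤ (1 - 1/(d+1))^d ≤ 1/2` and `1 ≤ 10^(1/9) ≤ 2`.
-/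

open Real

lemma mul_one_add_log_sub_log_le {a x : ℝ} (ha : 0 < a) (hx : 0 ≤ x) :
    x * (1 + log a - log x) ≤ a := by
  rcases hx.eq_or_lt with rfl | hx
  · simpa using ha.le
  have h := log_le_sub_one_of_pos (div_pos ha hx)
  rw [log_div ha.ne' hx.ne'] at h
  calc x * (1 + log a - log x) ≤ x * (a / x) := by gcongr; linarith
    _ = a := mul_div_cancel₀ a hx.ne'

lemma one_sub_one_div_succ_pow_eq_inv {n : ℕ} (hn : n ≠ 0) :
    (1 - 1 / ((n : ℝ) + 1)) ^ n = ((1 + (n : ℝ)⁻¹) ^ n)⁻¹ := by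
  have hn' : (n : ℝ) ≠ 0 := Nat.cast_ne_zero.mpr hn
  rw [← inv_pow]
  congr 1
  field_simp
  ring

lemma two_le_one_add_inv_pow {n : ℕ} (hn : n ≠ 0) : 2 ≤ (1 + (n : ℝ)⁻¹) ^ n := by
  have hinv : (0 : ℝ) ≤ (n : ℝ)⁻¹ := by positivity
  have h := one_add_mul_le_pow (a := (n : ℝ)⁻¹) (by linarith) n
  rwa [mul_inv_cancel₀ (Nat.cast_ne_zero.mpr hn), one_add_one_eq_two] at h

lemma one_sub_one_div_succ_pow_mem_Icc {n : ℕ} (hn : n ≠ 0) :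
    (1 - 1 / ((n : ℝ) + 1)) ^ n ∈ Set.Icc (1 / 3) (1 / 2) := by
  have hpos : 0 < (1 + (n : ℝ)⁻¹) ^ n := by positivity
  have hexp : (1 + (n : ℝ)⁻¹) ^ n ≤ 3 :=
    one_add_inv_pow_le_exp.trans (exp_one_lt_d9.le.trans (by norm_num))
  rw [one_sub_one_div_succ_pow_eq_inv hn, one_div, one_div]
  exact ⟨inv_anti₀ hpos hexp, inv_anti₀ two_pos (two_le_one_add_inv_pow hn)⟩

lemma ten_rpow_one_div_nine_mem_Icc : (10 : ℝ) ^ ((1 : ℝ) / 9) ∈ Set.Icc 1 2 := by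
  refine ⟨one_le_rpow (by norm_num) (by norm_num), ?_⟩
  calc (10 : ℝ) ^ ((1 : ℝ) / 9) ≤ ((2 : ℝ) ^ (9 : ℕ)) ^ ((1 : ℝ) / 9) :=
        rpow_le_rpow (by norm_num) (by norm_num) (by norm_num)
    _ = 2 := by
        rw [← rpow_natCast, ← rpow_mul (by norm_num)]
        norm_num

noncomputable def xMax (d : ℕ) : ℝ :=
  (10 : ℝ) ^ ((1 : ℝ) / 9) * (1 - 1 / ((d : ℝ) + 1)) ^ (d : ℕ) / ((d : ℝ) + 1)

lemma one_sub_one_div_succ_pow_pos (d : ℕ) : 0 < (1 - 1 / ((d : ℝ) + 1)) ^ d := by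
  rcases eq_or_ne d 0 with rfl | hd
  · simp
  · exact (one_div_pos.mpr three_pos).trans_le (one_sub_one_div_succ_pow_mem_Icc hd).1

lemma xMax_pos (d : ℕ) : 0 < xMax d := by
  have := one_sub_one_div_succ_pow_pos d
  unfold xMax
  positivity

lemma xMax_mem_Icc {d : ℕ} (hd : d ≠ 0) :
    xMax d ∈ Set.Icc (1 / (10 * (d : ℝ))) (1 / ((d : ℝ) + 1)) := by
  obtain ⟨hr1, hr2⟩ := ten_rpow_one_div_nine_mem_Icc
  obtain ⟨hc3, hc2⟩ := one_sub_one_div_succ_pow_mem_Icc hd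
  have hD : (1 : ℝ) ≤ d := Nat.one_le_cast.mpr (Nat.one_le_iff_ne_zero.mpr hd)
  have hlow : 1 / 3 ≤ (10 : ℝ) ^ ((1 : ℝ) / 9) * (1 - 1 / ((d : ℝ) + 1)) ^ d := by nlinarith
  have hup : (10 : ℝ) ^ ((1 : ℝ) / 9) * (1 - 1 / ((d : ℝ) + 1)) ^ d ≤ 1 := by nlinarith
  unfold xMax
  constructor
  · rw [div_le_div_iff₀ (by positivity) (by positivity)]
    nlinarith
  · rw [div_le_div_iff₀ (by positivity) (by positivity)]
    nlinarith

lemma log_xMax (d : ℕ) :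
    log (xMax d) = log 10 / 9 + d * log (1 - 1 / ((d : ℝ) + 1)) - log ((d : ℝ) + 1) := by
  have := one_sub_one_div_succ_pow_pos d
  rw [xMax, log_div (by positivity) (by positivity), log_mul (by positivity) this.ne',
    log_rpow (by norm_num), log_pow]
  ring

lemma g_eq_mul_one_add_log_sub_log (d : ℕ) (x : ℝ) :
    g d x = 10 / 9 * x * (1 + log (xMax d) - log x) := by
  have hd : (d : ℝ) + 1 ≠ 0 := by positivity
  rw [g, beta, log_xMax]
  field_simp
  ring

lemma g_le_g_xMax (d : ℕ) {x : ℝ} (hx : 0 ≤ x) : g d x ≤ g d (xMax d) := by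
  rw [g_eq_mul_one_add_log_sub_log, g_eq_mul_one_add_log_sub_log, add_sub_cancel_right, mul_one,
    mul_assoc]
  gcongr
  exact mul_one_add_log_sub_log_le (xMax_pos d) hx

lemma g_xMax (d : ℕ) :
    g d (xMax d) =
      (10 : ℝ) ^ ((10 : ℝ) / 9) * (1 - 1 / ((d : ℝ) + 1)) ^ d / (9 * ((d : ℝ) + 1)) := by
  have h10 : (10 : ℝ) ^ ((10 : ℝ) / 9) = 10 * (10 : ℝ) ^ ((1 : ℝ) / 9) := by
    rw [show (10 : ℝ) / 9 = 1 + 1 / 9 by norm_num, rpow_add (by norm_num), rpow_one]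
  rw [g_eq_mul_one_add_log_sub_log, add_sub_cancel_right, mul_one, xMax, h10]
  field_simp

theorem g_max (d : ℕ) (hd : d ∈ Finset.Icc 1 9) :
    let x₁ : ℝ := (10 : ℝ) ^ ((1 : ℝ) / 9) * (1 - 1 / ((d : ℝ) + 1)) ^ (d : ℕ) / ((d : ℝ) + 1)
    x₁ ∈ Set.Icc (1 / (10 * (d : ℝ))) (1 / ((d : ℝ) + 1)) ∧
    (∀ x ∈ Set.Icc (1 / (10 * (d : ℝ))) (1 / ((d : ℝ) + 1)), g d x ≤ g d x₁) ∧
    g d x₁ = (10 : ℝ) ^ ((10 : ℝ) / 9) * (1 - 1 / ((d : ℝ) + 1)) ^ (d : ℕ) / (9 * ((d : ℝ) + 1)) := by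
  have hd0 : d ≠ 0 := by grind
  refine ⟨xMax_mem_Icc hd0, fun x hx => g_le_g_xMax d ?_, g_xMax d⟩
  exact (one_div_nonneg.mpr (by positivity)).trans hx.1
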